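/- arXiv:1302.2992 — 3 statements merged into one kernel-verified Lean document; each statement's English description precedes it below -/
import Mathlib

section
/- Let x : Σⁿ → ℝ^{n+1} be an immersed hypersurface, F : Sⁿ → ℝ⁺ smooth with A_F = D²F + F·Id, S = −dν the Weingarten operator, S_F = A_F∘S the anisotropic Weingarten operator with components s_{ij} = Σ_l (A_{il}∘ν) h_{lj}, and H_F = tr S_F the anisotropic mean curvature. Then the anisotropic Laplacian Δ_F f := div(A_F ∇f) applied to F∘ν satisfies Δ_F(F∘ν) + tr(A_F S²)·(F∘ν) + ⟨∇H_F, DF|_ν⟩ = tr(S_F²). -/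
open Finset MeasureTheory

noncomputable section

/-- Kronecker delta. -/
def kron {n : ℕ} (i j : Fin n) : ℝ := if i = j then 1 else 0

/-- Covariant derivative of a 1-tensor `T` in an orthonormal frame `{e_i}` with
directional derivatives `D i = e_i` and connection coefficients
`Γ k i j = ω_{ki}(e_j)`: `T_{i;j} = e_j(T_i) + Σ_k T_k ω_{ki}(e_j)`. -/
def cov1 {n : ℕ} {S : Type} (D : Fin n → (S → ℝ) → S → ℝ)
    (Γ : Fin n → Fin n → Fin n → S → ℝ) (T : Fin n → S → ℝ)
    (i j : Fin n) (s : S) : ℝ :=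
  D j (T i) s + ∑ k, T k s * Γ k i j s

/-- Covariant derivative of a 2-tensor. -/
def cov2 {n : ℕ} {S : Type} (D : Fin n → (S → ℝ) → S → ℝ)
    (Γ : Fin n → Fin n → Fin n → S → ℝ) (T : Fin n → Fin n → S → ℝ)
    (i j k : Fin n) (s : S) : ℝ :=
  D k (T i j) s + (∑ l, T l j s * Γ l i k s) + ∑ l, T i l s * Γ l j k s

/-- The anisotropic Laplacian `Δ_F f = div(A_F ∇ f)` in frame components. -/
def lapF {n : ℕ} {S : Type} (D : Fin n → (S → ℝ) → S → ℝ)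
    (Γ : Fin n → Fin n → Fin n → S → ℝ) (Aν : Fin n → Fin n → S → ℝ)
    (f : S → ℝ) (s : S) : ℝ :=
  ∑ i, cov1 D Γ (fun k t => ∑ l, Aν k l t * D l f t) i i s

/-- Components `s_{ij} = Σ_l (A_{il}∘ν) h_{lj}` of the anisotropic Weingarten
operator `S_F = A_F ∘ S`. -/
def sF {n : ℕ} {S : Type} (Aν h : Fin n → Fin n → S → ℝ)
    (i j : Fin n) (s : S) : ℝ :=
  ∑ l, Aν i l s * h l j s

/-- The anisotropic mean curvature `H_F = tr S_F`. -/
def HF {n : ℕ} {S : Type} (Aν h : Fin n → Fin n → S → ℝ) (s : S) : ℝ :=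
  ∑ i, sF Aν h i i s

/-- `tr(S_F²) = Σ_{i,j} s_{ij} s_{ji}`. -/
def trSF2 {n : ℕ} {S : Type} (Aν h : Fin n → Fin n → S → ℝ) (s : S) : ℝ :=
  ∑ i, ∑ j, sF Aν h i j s * sF Aν h j i s

/-- `tr(A_F S²) = Σ_{i,j,k} (A_{ik}∘ν) h_{kj} h_{ji}`. -/
def trAFS2 {n : ℕ} {S : Type} (Aν h : Fin n → Fin n → S → ℝ) (s : S) : ℝ :=
  ∑ i, ∑ j, sF Aν h i j s * h j i s

/-! Writing `∇(F∘ν) = -X` with `X_l = Σ_j h_{lj} (F_j∘ν)`, the anisotropic Laplacian of `F∘ν`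
is `-div(A_F X)`. Expanding it and `⟨∇H_F, DF|_ν⟩` by the Leibniz rule (the connection terms
cancel since `ω` is antisymmetric), the terms containing `∇A_F` cancel by total symmetry of
`D³F`, those containing `∇h` cancel by the Codazzi equation, and the term containing
`∇(DF∘ν)` is `(F∘ν) tr(A_F S²) - tr(S_F²)`. -/

section Derivation

variable {S : Type} (d : (S → ℝ) → S → ℝ)

lemma apply_fun_sum (hadd : ∀ (f g : S → ℝ) s, d (fun t => f t + g t) s = d f s + d g s)
    {ι : Type} (A : Finset ι) (f : ι → S → ℝ) (s : S) :
    d (fun t => ∑ j ∈ A, f j t) s = ∑ j ∈ A, d (f j) s := by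
  let d' : (S → ℝ) →+ (S → ℝ) := AddMonoidHom.mk' d fun f g => funext (hadd f g)
  simpa [d', Finset.sum_fn] using congr_fun (map_sum d' f A) s

lemma apply_fun_neg (hadd : ∀ (f g : S → ℝ) s, d (fun t => f t + g t) s = d f s + d g s)
    (f : S → ℝ) (s : S) : d (fun t => -f t) s = -d f s := by
  let d' : (S → ℝ) →+ (S → ℝ) := AddMonoidHom.mk' d fun f g => funext (hadd f g)
  exact congr_fun (map_neg d' f) s

end Derivation

lemma sum_sum_antisymm_cancel {n : ℕ} {ω : Fin n → Fin n → ℝ}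
    (hω : ∀ a b, ω a b = -ω b a) (a x : Fin n → ℝ) :
    ∑ i, ∑ l, a l * ω l i * x i + ∑ i, ∑ l, a i * (x l * ω l i) = 0 := by
  rw [Finset.sum_comm, ← Finset.sum_add_distrib]
  refine Finset.sum_eq_zero fun i _ => ?_
  rw [← Finset.sum_add_distrib]
  refine Finset.sum_eq_zero fun l _ => ?_
  rw [hω l i]
  ring

section Frame

variable {n : ℕ} {S : Type} (D : Fin n → (S → ℝ) → S → ℝ)
  (Γ : Fin n → Fin n → Fin n → S → ℝ)

lemma cov1_sum_mul
    (hΓ : ∀ i j k s, Γ i j k s = -Γ j i k s)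
    (hDadd : ∀ i (f g : S → ℝ) s, D i (fun t => f t + g t) s = D i f s + D i g s)
    (hDmul : ∀ i (f g : S → ℝ) s,
      D i (fun t => f t * g t) s = D i f s * g s + f s * D i g s)
    (A : Fin n → Fin n → S → ℝ) (X : Fin n → S → ℝ) (i j : Fin n) (s : S) :
    cov1 D Γ (fun k t => ∑ l, A k l t * X l t) i j s
      = ∑ l, cov2 D Γ A i l j s * X l s + ∑ l, A i l s * cov1 D Γ X l j s := by
  unfold cov1 cov2
  rw [apply_fun_sum _ (hDadd j)]
  simp only [hDmul, add_mul, mul_add, Finset.sum_mul, Finset.mul_sum, Finset.sum_add_distrib]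
  have hcancel := sum_sum_antisymm_cancel (fun a b => hΓ a b j s) (A i · s) (X · s)
  beta_reduce at hcancel
  have hswap : ∑ k, ∑ l, A k l s * X l s * Γ k i j s
      = ∑ l, ∑ k, A k l s * Γ k i j s * X l s := by
    rw [Finset.sum_comm]
    simp only [mul_right_comm]
  linear_combination hswap - hcancel

lemma apply_sum_sum_mul_eq_sum_cov2
    (hΓ : ∀ i j k s, Γ i j k s = -Γ j i k s)
    (hDadd : ∀ i (f g : S → ℝ) s, D i (fun t => f t + g t) s = D i f s + D i g s)
    (hDmul : ∀ i (f g : S → ℝ) s,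
      D i (fun t => f t * g t) s = D i f s * g s + f s * D i g s)
    (A B : Fin n → Fin n → S → ℝ) (j : Fin n) (s : S) :
    D j (fun t => ∑ i, ∑ m, A i m t * B m i t) s
      = ∑ i, ∑ m, (cov2 D Γ A i m j s * B m i s + A i m s * cov2 D Γ B m i j s) := by
  unfold cov2
  simp only [apply_fun_sum _ (hDadd j), hDmul, add_mul, mul_add, Finset.sum_mul, Finset.mul_sum,
    Finset.sum_add_distrib]
  have hab : ∑ i, (∑ m, ∑ l, A i l s * Γ l m j s * B m i s
      + ∑ m, ∑ l, A i m s * (B l i s * Γ l m j s)) = 0 :=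
    Finset.sum_eq_zero fun i _ =>
      sum_sum_antisymm_cancel (fun a b => hΓ a b j s) (A i · s) (B · i s)
  have hcd : ∑ m, (∑ i, ∑ l, A l m s * Γ l i j s * B m i s
      + ∑ i, ∑ l, A i m s * (B m l s * Γ l i j s)) = 0 :=
    Finset.sum_eq_zero fun m _ =>
      sum_sum_antisymm_cancel (fun a b => hΓ a b j s) (A · m s) (B m · s)
  rw [Finset.sum_add_distrib, Finset.sum_comm, add_comm, Finset.sum_comm] at hcd
  rw [Finset.sum_add_distrib] at hab
  linear_combination -hab - hcd

lemma cov1_neg (hDadd : ∀ i (f g : S → ℝ) s, D i (fun t => f t + g t) s = D i f s + D i g s)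
    (T : Fin n → S → ℝ) (i j : Fin n) (s : S) :
    cov1 D Γ (fun k t => -T k t) i j s = -cov1 D Γ T i j s := by
  simp only [cov1, apply_fun_neg _ (hDadd j), neg_mul, Finset.sum_neg_distrib, neg_add]

lemma lapF_eq_neg_sum_cov1
    (hDadd : ∀ i (f g : S → ℝ) s, D i (fun t => f t + g t) s = D i f s + D i g s)
    (A : Fin n → Fin n → S → ℝ) (f : S → ℝ) (X : Fin n → S → ℝ)
    (hgrad : ∀ l t, D l f t = -X l t) (s : S) :
    lapF D Γ A f s = -∑ i, cov1 D Γ (fun k t => ∑ l, A k l t * X l t) i i s := by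
  simp only [lapF, hgrad, mul_neg, Finset.sum_neg_distrib, cov1_neg D Γ hDadd]

end Frame

lemma sum_mul_contract_eq_of_symm {n : ℕ} {T a : Fin n → Fin n → Fin n → ℝ}
    (hT : ∀ i j k, T i j k = T i k j) (h : Fin n → Fin n → ℝ)
    (ha : ∀ i j k, a i j k = -∑ p, T i j p * h p k) (F : Fin n → ℝ) :
    ∑ i, ∑ l, a i l i * ∑ j, h l j * F j = ∑ j, (∑ i, ∑ m, a i m j * h m i) * F j := by
  simp only [ha, neg_mul, Finset.sum_mul, Finset.mul_sum, Finset.sum_neg_distrib, neg_inj]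
  rw [Finset.sum_comm_cycle]
  refine Finset.sum_congr rfl fun j _ => Finset.sum_congr rfl fun i _ => ?_
  rw [Finset.sum_comm]
  refine Finset.sum_congr rfl fun m _ => Finset.sum_congr rfl fun p _ => ?_
  rw [hT]
  ring

lemma sum_mul_contract_eq_of_swap {n : ℕ} {b : Fin n → Fin n → Fin n → ℝ}
    (hb : ∀ i j k, b i j k = b i k j) (A : Fin n → Fin n → ℝ) (F : Fin n → ℝ) :
    ∑ i, ∑ l, A i l * ∑ j, b l j i * F j = ∑ j, (∑ i, ∑ m, A i m * b m i j) * F j := by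
  simp only [Finset.sum_mul, Finset.mul_sum]
  rw [Finset.sum_comm_cycle]
  refine Finset.sum_congr rfl fun j _ => Finset.sum_congr rfl fun i _ =>
    Finset.sum_congr rfl fun l _ => ?_
  rw [hb]
  ring

lemma sum_mul_contract_eq_sub_trSF2 {n : ℕ} {S : Type} (Aν h : Fin n → Fin n → S → ℝ)
    (Fν : S → ℝ) (s : S) (hsymm : ∀ i j, h i j s = h j i s) (G : Fin n → Fin n → ℝ)
    (hG : ∀ i j, G i j = -∑ k, h j k s * (Aν i k s - Fν s * kron i k)) :
    ∑ i, ∑ l, Aν i l s * ∑ j, h l j s * G j i = Fν s * trAFS2 Aν h s - trSF2 Aν h s := by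
  simp only [hG, trAFS2, trSF2, sF, kron, mul_sub, mul_ite, mul_one, mul_zero,
    Finset.sum_sub_distrib, Finset.sum_ite_eq, Finset.mem_univ, if_true, mul_neg,
    Finset.sum_neg_distrib, Finset.mul_sum, Finset.sum_mul]
  rw [neg_sub]
  congr 1
  · refine Finset.sum_congr rfl fun i _ => ?_
    rw [Finset.sum_comm]
    refine Finset.sum_congr rfl fun j _ => Finset.sum_congr rfl fun l _ => ?_
    rw [hsymm i j]
    ring
  · refine Finset.sum_congr rfl fun i _ => ?_
    conv_rhs => rw [Finset.sum_comm_cycle]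
    refine Finset.sum_congr rfl fun l _ => Finset.sum_congr rfl fun j _ =>
      Finset.sum_congr rfl fun k _ => ?_
    rw [hsymm i k]
    ring

theorem stmt_8_general (n : ℕ) (S : Type)
    (D : Fin n → (S → ℝ) → S → ℝ)
    (Γ : Fin n → Fin n → Fin n → S → ℝ)
    -- metric compatibility: `ω_{ij} = -ω_{ji}`
    (hΓ : ∀ i j k s, Γ i j k s = -Γ j i k s)
    -- `D i` is a derivation (linearity and Leibniz rule)
    (hDadd : ∀ i (f g : S → ℝ) s, D i (fun t => f t + g t) s = D i f s + D i g s)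
    (hDmul : ∀ i (f g : S → ℝ) s,
      D i (fun t => f t * g t) s = D i f s * g s + f s * D i g s)
    (h : Fin n → Fin n → S → ℝ)
    (hsymm : ∀ i j s, h i j s = h j i s)
    -- Codazzi equation `h_{ijk} = h_{ikj}`
    (hCodazzi : ∀ i j k s, cov2 D Γ h i j k s = cov2 D Γ h i k j s)
    (Fν : S → ℝ) (Fiν : Fin n → S → ℝ)
    (Aν : Fin n → Fin n → S → ℝ)
    (AAA : Fin n → Fin n → Fin n → S → ℝ)
    -- `A_{ij,k}` is totally symmetric
    (hAAAsymm : ∀ i j k s, AAA i j k s = AAA j i k s ∧ AAA i j k s = AAA i k j s)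
    -- `(F∘ν)_i = -Σ_j h_{ij} (F_j∘ν)`
    (hFν : ∀ i s, D i Fν s = -∑ j, h i j s * Fiν j s)
    -- `(F_i∘ν)_j = -Σ_k h_{jk} (F_{ik}∘ν)`, with `F_{ik} = A_{ik} - F δ_{ik}`
    (hFiν : ∀ i j s, cov1 D Γ Fiν i j s =
      -∑ k, h j k s * (Aν i k s - Fν s * kron i k))
    -- `(A_{ij}∘ν)_k = -Σ_p (A_{ij,p}∘ν) h_{pk}`
    (hAν : ∀ i j k s, cov2 D Γ Aν i j k s = -∑ p, AAA i j p s * h p k s)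
    :
    ∀ s, lapF D Γ Aν Fν s + trAFS2 Aν h s * Fν s +
      (∑ j, D j (fun t => HF Aν h t) s * Fiν j s) = trSF2 Aν h s := by
  intro s
  have hlap := lapF_eq_neg_sum_cov1 D Γ hDadd Aν Fν (fun m t => ∑ j, h m j t * Fiν j t) hFν s
  simp only [cov1_sum_mul D Γ hΓ hDadd hDmul] at hlap
  have hgradH : ∀ j, D j (fun t => HF Aν h t) s = ∑ i, ∑ m,
      (cov2 D Γ Aν i m j s * h m i s + Aν i m s * cov2 D Γ h m i j s) :=
    fun j => apply_sum_sum_mul_eq_sum_cov2 D Γ hΓ hDadd hDmul Aν h j s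
  have hdivA := sum_mul_contract_eq_of_symm (fun i j k => (hAAAsymm i j k s).2) (h · · s)
    (fun i j k => hAν i j k s) (Fiν · s)
  have hcodazzi :=
    sum_mul_contract_eq_of_swap (fun i j k => hCodazzi i j k s) (Aν · · s) (Fiν · s)
  have hrest := sum_mul_contract_eq_sub_trSF2 Aν h Fν s (hsymm · · s) _ (hFiν · · s)
  rw [hlap]
  simp only [hgradH, mul_add, add_mul, Finset.sum_add_distrib]
  linear_combination -hdivA - hcodazzi - hrest

/-- Key Simons-type identity:
`Δ_F(F∘ν) + tr(A_F S²)·(F∘ν) + ⟨∇H_F, DF|_ν⟩ = tr(S_F²)`. -/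
theorem stmt_8 (n : ℕ) (S : Type)
    (D : Fin n → (S → ℝ) → S → ℝ)
    (Γ : Fin n → Fin n → Fin n → S → ℝ)
    -- metric compatibility: `ω_{ij} = -ω_{ji}`
    (hΓ : ∀ i j k s, Γ i j k s = -Γ j i k s)
    -- `D i` is a derivation (linearity and Leibniz rule)
    (hDadd : ∀ i (f g : S → ℝ) s, D i (fun t => f t + g t) s = D i f s + D i g s)
    (hDmul : ∀ i (f g : S → ℝ) s,
      D i (fun t => f t * g t) s = D i f s * g s + f s * D i g s)
    (h : Fin n → Fin n → S → ℝ)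
    (hsymm : ∀ i j s, h i j s = h j i s)
    -- Codazzi equation `h_{ijk} = h_{ikj}`
    (hCodazzi : ∀ i j k s, cov2 D Γ h i j k s = cov2 D Γ h i k j s)
    (Fν : S → ℝ) (Fiν : Fin n → S → ℝ)
    (Aν : Fin n → Fin n → S → ℝ) (hAsymm : ∀ i j s, Aν i j s = Aν j i s)
    (AAA : Fin n → Fin n → Fin n → S → ℝ)
    -- `A_{ij,k}` is totally symmetric
    (hAAAsymm : ∀ i j k s, AAA i j k s = AAA j i k s ∧ AAA i j k s = AAA i k j s)
    -- `(F∘ν)_i = -Σ_j h_{ij} (F_j∘ν)`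
    (hFν : ∀ i s, D i Fν s = -∑ j, h i j s * Fiν j s)
    -- `(F_i∘ν)_j = -Σ_k h_{jk} (F_{ik}∘ν)`, with `F_{ik} = A_{ik} - F δ_{ik}`
    (hFiν : ∀ i j s, cov1 D Γ Fiν i j s =
      -∑ k, h j k s * (Aν i k s - Fν s * kron i k))
    -- `(A_{ij}∘ν)_k = -Σ_p (A_{ij,p}∘ν) h_{pk}`
    (hAν : ∀ i j k s, cov2 D Γ Aν i j k s = -∑ p, AAA i j p s * h p k s)
    :
    ∀ s, lapF D Γ Aν Fν s + trAFS2 Aν h s * Fν s +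
      (∑ j, D j (fun t => HF Aν h t) s * Fiν j s) = trSF2 Aν h s :=
  stmt_8_general n S D Γ hΓ hDadd hDmul h hsymm hCodazzi Fν Fiν Aν AAA hAAAsymm hFν hFiν hAν
end
end

section
/- Let x : Σⁿ → ℝ^{n+1} be a closed orientable immersed hypersurface with Gauss map ν, F : Sⁿ → ℝ⁺ smooth, and H_F the anisotropic mean curvature. Then the anisotropic Minkowski formula holds: ∫_Σ (n·F∘ν + H_F·⟨x, ν⟩) dA = 0. -/
open Finset MeasureTheory

noncomputable section

/-!
The integrand is the divergence of the tangential field `Z = F(ν) xᵀ - ⟨x, ν⟩ (∇F)(ν)`, so it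
integrates to zero. In an orthonormal frame, with `h` the second fundamental form,
`div (F(ν) xᵀ) = n F(ν) + F(ν) H ⟨x, ν⟩ - h((∇F)(ν), xᵀ)` and
`div (⟨x, ν⟩ (∇F)(ν)) = -h(xᵀ, (∇F)(ν)) + ⟨x, ν⟩ (F(ν) H - H_F)`; the two `h`-terms cancel because
`h` is symmetric.
-/

open scoped RealInnerProductSpace

section Additive

variable {S : Type*} (d : (S → ℝ) → S → ℝ)
  (hadd : ∀ (f g : S → ℝ) s, d (fun t => f t + g t) s = d f s + d g s)
include hadd

theorem map_sum_of_map_add {ι : Type*} (A : Finset ι) (f : ι → S → ℝ) (s : S) :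
    d (fun t => ∑ p ∈ A, f p t) s = ∑ p ∈ A, d (f p) s := by
  let L : (S → ℝ) →+ ℝ := AddMonoidHom.mk' (fun f => d f s) (fun f g => hadd f g s)
  simpa [L, Finset.sum_fn] using map_sum L f A

theorem map_sub_of_map_add (f g : S → ℝ) (s : S) :
    d (fun t => f t - g t) s = d f s - d g s :=
  map_sub (AddMonoidHom.mk' (fun f => d f s) (fun f g => hadd f g s)) f g

end Additive

section InnerLeibniz

variable {S E : Type*} [NormedAddCommGroup E] [InnerProductSpace ℝ E]

def HasDerivAlong (d : (S → ℝ) → S → ℝ) (u : S → E) (s : S) (u' : E) : Prop :=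
  ∀ w, d (fun t => ⟪u t, w⟫) s = ⟪u', w⟫

theorem HasDerivAlong.inner [FiniteDimensional ℝ E] {d : (S → ℝ) → S → ℝ}
    (hadd : ∀ (f g : S → ℝ) s, d (fun t => f t + g t) s = d f s + d g s)
    (hmul : ∀ (f g : S → ℝ) s, d (fun t => f t * g t) s = d f s * g s + f s * d g s)
    {u v : S → E} {s : S} {u' v' : E}
    (hu : HasDerivAlong d u s u') (hv : HasDerivAlong d v s v') :
    d (fun t => ⟪u t, v t⟫) s = ⟪u', v s⟫ + ⟪u s, v'⟫ := by
  let b := stdOrthonormalBasis ℝ E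
  have hexpand : ∀ y z : E, ⟪y, z⟫ = ∑ p, ⟪y, b p⟫ * ⟪z, b p⟫ := fun y z => by
    rw [← b.sum_inner_mul_inner y z]
    exact Finset.sum_congr rfl fun p _ => by rw [real_inner_comm (b p) z]
  have hprod : (fun t => ⟪u t, v t⟫) = fun t => ∑ p, ⟪u t, b p⟫ * ⟪v t, b p⟫ :=
    funext fun t => hexpand _ _
  rw [hprod, map_sum_of_map_add d hadd, hexpand u', hexpand (u s) v', ← Finset.sum_add_distrib]
  refine Finset.sum_congr rfl fun p _ => ?_
  rw [hmul, hu, hv]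

end InnerLeibniz

section FrameCalculus

variable {n : ℕ} {S : Type} (D : Fin n → (S → ℝ) → S → ℝ) (Γ : Fin n → Fin n → Fin n → S → ℝ)

theorem cov1_sub (hDadd : ∀ i (f g : S → ℝ) s, D i (fun t => f t + g t) s = D i f s + D i g s)
    (T U : Fin n → S → ℝ) (i j : Fin n) (s : S) :
    cov1 D Γ (fun k t => T k t - U k t) i j s = cov1 D Γ T i j s - cov1 D Γ U i j s := by
  simp only [cov1, map_sub_of_map_add (D j) (hDadd j), sub_mul, Finset.sum_sub_distrib]
  ring

theorem cov1_mul_left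
    (hDmul : ∀ i (f g : S → ℝ) s, D i (fun t => f t * g t) s = D i f s * g s + f s * D i g s)
    (f : S → ℝ) (T : Fin n → S → ℝ) (i j : Fin n) (s : S) :
    cov1 D Γ (fun k t => f t * T k t) i j s = D j f s * T i s + f s * cov1 D Γ T i j s := by
  simp only [cov1, hDmul, mul_add, Finset.mul_sum, mul_assoc]
  ring

end FrameCalculus

theorem sum_bilinear_comm_of_symm {ι R : Type*} [Fintype ι] [CommRing R]
    {h : ι → ι → R} (hsymm : ∀ i j, h i j = h j i) (a b : ι → R) :
    ∑ i, (∑ j, h i j * a j) * b i = ∑ i, (∑ j, h i j * b j) * a i := by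
  simp only [Finset.sum_mul]
  rw [Finset.sum_comm]
  exact Finset.sum_congr rfl fun i _ => Finset.sum_congr rfl fun j _ => by rw [hsymm]; ring

section Hypersurface

variable {n : ℕ} {S : Type} {E : Type*} [NormedAddCommGroup E] [InnerProductSpace ℝ E] [FiniteDimensional ℝ E]
  {D : Fin n → (S → ℝ) → S → ℝ} {Γ : Fin n → Fin n → Fin n → S → ℝ} {h : Fin n → Fin n → S → ℝ}
  {x ν : S → E} {e : Fin n → S → E} {Fν : S → ℝ} {Fiν : Fin n → S → ℝ}
  {Aν : Fin n → Fin n → S → ℝ}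
  (hΓ : ∀ i j k s, Γ i j k s = -Γ j i k s)
  (hDadd : ∀ i (f g : S → ℝ) s, D i (fun t => f t + g t) s = D i f s + D i g s)
  (hDmul : ∀ i (f g : S → ℝ) s, D i (fun t => f t * g t) s = D i f s * g s + f s * D i g s)
  (horth : ∀ i j s, ⟪e i s, e j s⟫ = kron i j)
  (hνtan : ∀ i s, ⟪e i s, ν s⟫ = 0)
  (hx : ∀ i w s, D i (fun t => ⟪x t, w⟫) s = ⟪e i s, w⟫)
  (hν : ∀ i w s, D i (fun t => ⟪ν t, w⟫) s = -∑ j, h i j s * ⟪e j s, w⟫)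
  (he : ∀ i j w s, D j (fun t => ⟪e i t, w⟫) s =
    (∑ k, Γ i k j s * ⟪e k s, w⟫) + h i j s * ⟪ν s, w⟫)
  (hsymm : ∀ i j s, h i j s = h j i s)
  (hFν : ∀ i s, D i Fν s = -∑ j, h i j s * Fiν j s)
  (hFiν : ∀ i j s, cov1 D Γ Fiν i j s = -∑ k, h j k s * (Aν i k s - Fν s * kron i k))

include hDadd hDmul hνtan hx hν in
theorem deriv_inner_position_normal (i : Fin n) (s : S) :
    D i (fun t => ⟪x t, ν t⟫) s = -∑ j, h i j s * ⟪x s, e j s⟫ := by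
  have hνderiv : HasDerivAlong (D i) ν s (-∑ j, h i j s • e j s) := fun w => by
    simp [hν, inner_neg_left, sum_inner, inner_smul_left]
  rw [HasDerivAlong.inner (hDadd i) (hDmul i) (hx i · s) hνderiv, hνtan]
  simp [inner_neg_right, inner_sum, inner_smul_right]

include hΓ hDadd hDmul horth hx he in
theorem cov1_inner_position_frame (i j : Fin n) (s : S) :
    cov1 D Γ (fun k t => ⟪x t, e k t⟫) i j s = kron j i + h i j s * ⟪x s, ν s⟫ := by
  have hederiv : HasDerivAlong (D j) (e i) s (∑ k, Γ i k j s • e k s + h i j s • ν s) := fun w => by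
    simp [he, inner_add_left, sum_inner, inner_smul_left]
  rw [cov1, HasDerivAlong.inner (hDadd j) (hDmul j) (hx j · s) hederiv, horth]
  simp only [inner_add_right, inner_sum, inner_smul_right, hΓ _ i j,
    neg_mul, Finset.sum_neg_distrib, mul_comm ⟪x s, _⟫]
  ring

def minkowskiField (Fν : S → ℝ) (Fiν : Fin n → S → ℝ) (x ν : S → E) (e : Fin n → S → E) :
    Fin n → S → ℝ :=
  fun i t => Fν t * ⟪x t, e i t⟫ - ⟪x t, ν t⟫ * Fiν i t

include hΓ hDadd hDmul horth hνtan hx hν he hFν hFiν in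
theorem cov1_minkowskiField_self (i : Fin n) (s : S) :
    cov1 D Γ (minkowskiField Fν Fiν x ν e) i i s =
      Fν s + ⟪x s, ν s⟫ * ∑ k, h i k s * Aν i k s +
        ((∑ j, h i j s * ⟪x s, e j s⟫) * Fiν i s - (∑ j, h i j s * Fiν j s) * ⟪x s, e i s⟫) := by
  unfold minkowskiField
  rw [cov1_sub D Γ hDadd, cov1_mul_left D Γ hDmul, cov1_mul_left D Γ hDmul,
    cov1_inner_position_frame hΓ hDadd hDmul horth hx he, hFiν, hFν,
    deriv_inner_position_normal hDadd hDmul hνtan hx hν]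
  simp only [kron, if_pos, mul_sub, Finset.sum_sub_distrib, mul_ite, mul_one, mul_zero,
    Finset.sum_ite_eq, Finset.mem_univ]
  ring

include hΓ hDadd hDmul horth hνtan hx hν he hsymm hFν hFiν in
theorem sum_cov1_minkowskiField (s : S) :
    ∑ i, cov1 D Γ (minkowskiField Fν Fiν x ν e) i i s = n * Fν s + HF Aν h s * ⟪x s, ν s⟫ := by
  have hHF : HF Aν h s = ∑ i, ∑ k, h i k s * Aν i k s :=
    Finset.sum_congr rfl fun i _ => Finset.sum_congr rfl fun k _ => by rw [hsymm]; ring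
  simp only [cov1_minkowskiField_self hΓ hDadd hDmul horth hνtan hx hν he hFν hFiν,
    Finset.sum_add_distrib, Finset.sum_sub_distrib, sum_bilinear_comm_of_symm (hsymm · · s),
    sub_self, add_zero, Finset.sum_const, Finset.card_univ, Fintype.card_fin, nsmul_eq_mul,
    ← Finset.mul_sum, hHF]
  ring

end Hypersurface

theorem stmt_11_general (n : ℕ) (S : Type)
    (D : Fin n → (S → ℝ) → S → ℝ)
    (Γ : Fin n → Fin n → Fin n → S → ℝ)
    -- metric compatibility: `ω_{ij} = -ω_{ji}`
    (hΓ : ∀ i j k s, Γ i j k s = -Γ j i k s)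
    -- `D i` is a derivation (linearity and Leibniz rule)
    (hDadd : ∀ i (f g : S → ℝ) s, D i (fun t => f t + g t) s = D i f s + D i g s)
    (hDmul : ∀ i (f g : S → ℝ) s,
      D i (fun t => f t * g t) s = D i f s * g s + f s * D i g s)
    (h : Fin n → Fin n → S → ℝ)
    (hsymm : ∀ i j s, h i j s = h j i s)
    (Fν : S → ℝ) (Fiν : Fin n → S → ℝ)
    (Aν : Fin n → Fin n → S → ℝ)
    -- `(F∘ν)_i = -Σ_j h_{ij} (F_j∘ν)`
    (hFν : ∀ i s, D i Fν s = -∑ j, h i j s * Fiν j s)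
    -- `(F_i∘ν)_j = -Σ_k h_{jk} (F_{ik}∘ν)`, with `F_{ik} = A_{ik} - F δ_{ik}`
    (hFiν : ∀ i j s, cov1 D Γ Fiν i j s =
      -∑ k, h j k s * (Aν i k s - Fν s * kron i k))
    (x ν : S → EuclideanSpace ℝ (Fin (n + 1)))
    (e : Fin n → S → EuclideanSpace ℝ (Fin (n + 1)))
    (horth : ∀ i j s, (inner ℝ (e i s) (e j s) : ℝ) = kron i j)
    (hνtan : ∀ i s, (inner ℝ (e i s) (ν s) : ℝ) = 0)
    -- `dx(e_i) = e_i`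
    (hx : ∀ i (w : EuclideanSpace ℝ (Fin (n + 1))) s,
      D i (fun t => (inner ℝ (x t) w : ℝ)) s = inner ℝ (e i s) w)
    -- Weingarten equation `dν(e_i) = -Σ_j h_{ij} e_j`
    (hν : ∀ i (w : EuclideanSpace ℝ (Fin (n + 1))) s,
      D i (fun t => (inner ℝ (ν t) w : ℝ)) s = -∑ j, h i j s * (inner ℝ (e j s) w : ℝ))
    -- Gauss formula `de_i(e_j) = Σ_k ω_{ik}(e_j) e_k + h_{ij} ν`
    (he : ∀ i j (w : EuclideanSpace ℝ (Fin (n + 1))) s,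
      D j (fun t => (inner ℝ (e i t) w : ℝ)) s =
        (∑ k, Γ i k j s * (inner ℝ (e k s) w : ℝ)) + h i j s * (inner ℝ (ν s) w : ℝ))
    [MeasurableSpace S] (μ : Measure S)
    -- divergence theorem on the closed hypersurface: total divergence of any
    -- tangential vector field integrates to zero against the area measure
    (hdivthm : ∀ T : Fin n → S → ℝ, ∫ s, (∑ i, cov1 D Γ T i i s) ∂μ = 0)
    :
    ∫ s, ((n : ℝ) * Fν s + HF Aν h s * (inner ℝ (x s) (ν s) : ℝ)) ∂μ = 0 := by
  simpa only [sum_cov1_minkowskiField hΓ hDadd hDmul horth hνtan hx hν he hsymm hFν hFiν]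
    using hdivthm (minkowskiField Fν Fiν x ν e)

/-- Anisotropic Minkowski formula: `∫_Σ (n F∘ν + H_F ⟨x,ν⟩) dA = 0` for a
closed orientable immersed hypersurface. -/
theorem stmt_11 (n : ℕ) (S : Type)
    (D : Fin n → (S → ℝ) → S → ℝ)
    (Γ : Fin n → Fin n → Fin n → S → ℝ)
    -- metric compatibility: `ω_{ij} = -ω_{ji}`
    (hΓ : ∀ i j k s, Γ i j k s = -Γ j i k s)
    -- `D i` is a derivation (linearity and Leibniz rule)
    (hDadd : ∀ i (f g : S → ℝ) s, D i (fun t => f t + g t) s = D i f s + D i g s)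
    (hDmul : ∀ i (f g : S → ℝ) s,
      D i (fun t => f t * g t) s = D i f s * g s + f s * D i g s)
    (h : Fin n → Fin n → S → ℝ)
    (hsymm : ∀ i j s, h i j s = h j i s)
    -- Codazzi equation `h_{ijk} = h_{ikj}`
    (hCodazzi : ∀ i j k s, cov2 D Γ h i j k s = cov2 D Γ h i k j s)
    (Fν : S → ℝ) (Fiν : Fin n → S → ℝ)
    (Aν : Fin n → Fin n → S → ℝ) (hAsymm : ∀ i j s, Aν i j s = Aν j i s)
    (AAA : Fin n → Fin n → Fin n → S → ℝ)
    -- `A_{ij,k}` is totally symmetric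
    (hAAAsymm : ∀ i j k s, AAA i j k s = AAA j i k s ∧ AAA i j k s = AAA i k j s)
    -- `(F∘ν)_i = -Σ_j h_{ij} (F_j∘ν)`
    (hFν : ∀ i s, D i Fν s = -∑ j, h i j s * Fiν j s)
    -- `(F_i∘ν)_j = -Σ_k h_{jk} (F_{ik}∘ν)`, with `F_{ik} = A_{ik} - F δ_{ik}`
    (hFiν : ∀ i j s, cov1 D Γ Fiν i j s =
      -∑ k, h j k s * (Aν i k s - Fν s * kron i k))
    -- `(A_{ij}∘ν)_k = -Σ_p (A_{ij,p}∘ν) h_{pk}`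
    (hAν : ∀ i j k s, cov2 D Γ Aν i j k s = -∑ p, AAA i j p s * h p k s)
    (x ν : S → EuclideanSpace ℝ (Fin (n + 1)))
    (e : Fin n → S → EuclideanSpace ℝ (Fin (n + 1)))
    (horth : ∀ i j s, (inner ℝ (e i s) (e j s) : ℝ) = kron i j)
    (hνunit : ∀ s, (inner ℝ (ν s) (ν s) : ℝ) = 1)
    (hνtan : ∀ i s, (inner ℝ (e i s) (ν s) : ℝ) = 0)
    -- `dx(e_i) = e_i`
    (hx : ∀ i (w : EuclideanSpace ℝ (Fin (n + 1))) s,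
      D i (fun t => (inner ℝ (x t) w : ℝ)) s = inner ℝ (e i s) w)
    -- Weingarten equation `dν(e_i) = -Σ_j h_{ij} e_j`
    (hν : ∀ i (w : EuclideanSpace ℝ (Fin (n + 1))) s,
      D i (fun t => (inner ℝ (ν t) w : ℝ)) s = -∑ j, h i j s * (inner ℝ (e j s) w : ℝ))
    -- Gauss formula `de_i(e_j) = Σ_k ω_{ik}(e_j) e_k + h_{ij} ν`
    (he : ∀ i j (w : EuclideanSpace ℝ (Fin (n + 1))) s,
      D j (fun t => (inner ℝ (e i t) w : ℝ)) s =
        (∑ k, Γ i k j s * (inner ℝ (e k s) w : ℝ)) + h i j s * (inner ℝ (ν s) w : ℝ))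
    [MeasurableSpace S] (μ : Measure S) [IsFiniteMeasure μ]
    -- divergence theorem on the closed hypersurface: total divergence of any
    -- tangential vector field integrates to zero against the area measure
    (hdivthm : ∀ T : Fin n → S → ℝ, ∫ s, (∑ i, cov1 D Γ T i i s) ∂μ = 0)
    :
    ∫ s, ((n : ℝ) * Fν s + HF Aν h s * (inner ℝ (x s) (ν s) : ℝ)) ∂μ = 0 :=
  stmt_11_general n S D Γ hΓ hDadd hDmul h hsymm Fν Fiν Aν hFν hFiν x ν e horth hνtan hx hν he μ
    hdivthm
end
end

section
/- Let x : Σⁿ → ℝ^{n+1} be an immersed hypersurface and F : Sⁿ → ℝ⁺ smooth. The components s_{ij} = Σ_l (A_{il}∘ν) h_{lj} of the anisotropic Weingarten operator satisfy the anisotropic Codazzi equation: the covariant derivative s_{ijk} is symmetric in the last two indices, s_{ijk} = s_{ikj}, where s_{ijk} = −Σ_{l,p}(A_{ilp}∘ν) h_{pk} h_{lj} + Σ_l (A_{il}∘ν) h_{ljk}. -/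
open Finset MeasureTheory

noncomputable section

theorem sum_sum_mul_mul_comm_of_symm {ι : Type*} [Fintype ι] (T : ι → ι → ℝ)
    (hT : ∀ l p, T l p = T p l) (a b : ι → ℝ) :
    ∑ l, ∑ p, T l p * a p * b l = ∑ l, ∑ p, T l p * b p * a l := by
  rw [Finset.sum_comm]
  refine Finset.sum_congr rfl fun l _ => Finset.sum_congr rfl fun p _ => ?_
  rw [hT]
  ring

theorem stmt_16_general (n : ℕ) (S : Type)
    (D : Fin n → (S → ℝ) → S → ℝ)
    (Γ : Fin n → Fin n → Fin n → S → ℝ)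
    (h : Fin n → Fin n → S → ℝ)
    -- Codazzi equation `h_{ijk} = h_{ikj}`
    (hCodazzi : ∀ i j k s, cov2 D Γ h i j k s = cov2 D Γ h i k j s)
    (Aν : Fin n → Fin n → S → ℝ)
    (AAA : Fin n → Fin n → Fin n → S → ℝ)
    -- `A_{ij,k}` is totally symmetric
    (hAAAsymm : ∀ i j k s, AAA i j k s = AAA j i k s ∧ AAA i j k s = AAA i k j s)
    (sD : Fin n → Fin n → Fin n → S → ℝ)
    (hsD : ∀ i j k s, sD i j k s =
      (-∑ l, ∑ p, AAA i l p s * h p k s * h l j s) +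
        ∑ l, Aν i l s * cov2 D Γ h l j k s)
    :
    ∀ i j k s, sD i j k s = sD i k j s := by
  intro i j k s
  -- `A_{ilp}` is symmetric in `l, p`, and `h_{ljk} = h_{lkj}` by Codazzi.
  rw [hsD, hsD, sum_sum_mul_mul_comm_of_symm _ fun l p => (hAAAsymm i l p s).2]
  simp only [hCodazzi]

/-- Anisotropic Codazzi equation: the covariant derivative
`s_{ijk} = -Σ_{l,p} (A_{il,p}∘ν) h_{pk} h_{lj} + Σ_l (A_{il}∘ν) h_{ljk}` of the
anisotropic Weingarten operator is symmetric in the last two indices. -/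
theorem stmt_16 (n : ℕ) (S : Type)
    (D : Fin n → (S → ℝ) → S → ℝ)
    (Γ : Fin n → Fin n → Fin n → S → ℝ)
    -- metric compatibility: `ω_{ij} = -ω_{ji}`
    (hΓ : ∀ i j k s, Γ i j k s = -Γ j i k s)
    -- `D i` is a derivation (linearity and Leibniz rule)
    (hDadd : ∀ i (f g : S → ℝ) s, D i (fun t => f t + g t) s = D i f s + D i g s)
    (hDmul : ∀ i (f g : S → ℝ) s,
      D i (fun t => f t * g t) s = D i f s * g s + f s * D i g s)
    (h : Fin n → Fin n → S → ℝ)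
    (hsymm : ∀ i j s, h i j s = h j i s)
    -- Codazzi equation `h_{ijk} = h_{ikj}`
    (hCodazzi : ∀ i j k s, cov2 D Γ h i j k s = cov2 D Γ h i k j s)
    (Fν : S → ℝ) (Fiν : Fin n → S → ℝ)
    (Aν : Fin n → Fin n → S → ℝ) (hAsymm : ∀ i j s, Aν i j s = Aν j i s)
    (AAA : Fin n → Fin n → Fin n → S → ℝ)
    -- `A_{ij,k}` is totally symmetric
    (hAAAsymm : ∀ i j k s, AAA i j k s = AAA j i k s ∧ AAA i j k s = AAA i k j s)
    -- `(F∘ν)_i = -Σ_j h_{ij} (F_j∘ν)`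
    (hFν : ∀ i s, D i Fν s = -∑ j, h i j s * Fiν j s)
    -- `(F_i∘ν)_j = -Σ_k h_{jk} (F_{ik}∘ν)`, with `F_{ik} = A_{ik} - F δ_{ik}`
    (hFiν : ∀ i j s, cov1 D Γ Fiν i j s =
      -∑ k, h j k s * (Aν i k s - Fν s * kron i k))
    -- `(A_{ij}∘ν)_k = -Σ_p (A_{ij,p}∘ν) h_{pk}`
    (hAν : ∀ i j k s, cov2 D Γ Aν i j k s = -∑ p, AAA i j p s * h p k s)
    (sD : Fin n → Fin n → Fin n → S → ℝ)
    (hsD : ∀ i j k s, sD i j k s =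
      (-∑ l, ∑ p, AAA i l p s * h p k s * h l j s) +
        ∑ l, Aν i l s * cov2 D Γ h l j k s)
    :
    ∀ i j k s, sD i j k s = sD i k j s :=
  stmt_16_general n S D Γ h hCodazzi Aν AAA hAAAsymm sD hsD
end
end
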